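/- Let K₀ = max{1, 2(9+ε)/r}. For every constant c > 0 there exists a constant K₁ > 0 such that, for all sufficiently large n, the following holds: for every positive integer T ≤ K₀·ln n, if Z₁, …, Z_T are independent random variables with Z_t distributed Binomial(n, p(t)) where p(t) = 1 − (1−p₂)(1−p₃)^t, then P(Z₁ + Z₂ + ⋯ + Z_T > K₁·ln n) ≤ n^{−c}. -/

import Mathlib

/-! Chernoff bound at `s = 1`. The mgf of `Bin(n, p)` at `1` is `(1 + p(e - 1))ⁿ ≤ exp (n p (e - 1))`,
and by Bernoulli's inequality `n p(t) ≤ (1 - ε) + t r / ln n ≤ 1 - ε + K₀ r` for `t ≤ T ≤ K₀ ln n`.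
Hence `E exp (Z₁ + ⋯ + Z_T) ≤ exp (K₀ B ln n)` with `B = (1 - ε + K₀ r)(e - 1)`, and Markov's
inequality gives `P(Z₁ + ⋯ + Z_T > (c + K₀ B) ln n) ≤ n^{-c}`. -/

open MeasureTheory Real

noncomputable def binomialMeasure (N : ℕ) (p : ℝ) : Measure ℕ :=
  ∑ k ∈ Finset.range (N + 1),
    (ENNReal.ofReal ((N.choose k : ℝ) * p ^ k * (1 - p) ^ (N - k))) • Measure.dirac k

noncomputable def K0 (ε r : ℝ) : ℝ := max 1 (2 * (9 + ε) / r)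

/-- The edge-hitting probability `p(t) = 1 - (1-p₂)(1-p₃)^t` with `p₂ = (1-ε)/n`
and `p₃ = r/(n ln n)`. -/
noncomputable def pfun (n : ℕ) (ε r : ℝ) (t : ℕ) : ℝ :=
  1 - (1 - (1 - ε) / n) * (1 - r / (n * Real.log n)) ^ t

open ProbabilityTheory Set

section Binomial

variable {n : ℕ} {p : ℝ}

lemma integrable_ofReal_smul_dirac (w : ℝ) (k : ℕ) (f : ℕ → ℝ) :
    Integrable f (ENNReal.ofReal w • Measure.dirac k) :=
  ((integrable_const (f k)).congr (ae_eq_dirac f).symm).smul_measure ENNReal.ofReal_ne_top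

lemma integrable_binomialMeasure (n : ℕ) (p : ℝ) (f : ℕ → ℝ) :
    Integrable f (binomialMeasure n p) :=
  integrable_finsetSum_measure.2 fun k _ => integrable_ofReal_smul_dirac _ k f

lemma integral_binomialMeasure (hp : p ∈ Icc 0 1) (f : ℕ → ℝ) :
    ∫ k, f k ∂binomialMeasure n p =
      ∑ k ∈ Finset.range (n + 1), (n.choose k : ℝ) * p ^ k * (1 - p) ^ (n - k) * f k := by
  rw [binomialMeasure,
    integral_finsetSum_measure fun k _ => integrable_ofReal_smul_dirac _ k f]
  refine Finset.sum_congr rfl fun k _ => ?_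
  have hw : 0 ≤ (n.choose k : ℝ) * p ^ k * (1 - p) ^ (n - k) := by
    have := hp.1; have := hp.2; positivity
  rw [integral_smul_measure, integral_dirac, ENNReal.toReal_ofReal hw, smul_eq_mul]

lemma mgf_binomialMeasure (hp : p ∈ Icc 0 1) (s : ℝ) :
    mgf (fun k : ℕ => (k : ℝ)) (binomialMeasure n p) s = (p * exp s + (1 - p)) ^ n := by
  rw [mgf, integral_binomialMeasure hp, add_pow]
  refine Finset.sum_congr rfl fun k _ => ?_
  rw [mul_comm s, exp_nat_mul, mul_pow]
  ring

lemma mgf_binomialMeasure_le (hp : p ∈ Icc 0 1) (s : ℝ) :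
    mgf (fun k : ℕ => (k : ℝ)) (binomialMeasure n p) s ≤ exp (n * p * (exp s - 1)) := by
  have hbase : 0 ≤ p * exp s + (1 - p) := by have := hp.1; have := hp.2; positivity
  calc mgf (fun k : ℕ => (k : ℝ)) (binomialMeasure n p) s = (p * exp s + (1 - p)) ^ n :=
        mgf_binomialMeasure hp s
    _ ≤ exp (p * (exp s - 1)) ^ n := by
        gcongr
        linarith [add_one_le_exp (p * (exp s - 1))]
    _ = exp (n * p * (exp s - 1)) := by rw [← exp_nat_mul, mul_assoc]

end Binomial

section Chernoff

variable {Ω ι : Type*} {mΩ : MeasurableSpace Ω} {μ : Measure Ω}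

lemma mgf_natCast_le_of_map_eq_binomialMeasure {Z : Ω → ℕ} {n : ℕ} {p : ℝ} (hZ : Measurable Z)
    (hlaw : μ.map Z = binomialMeasure n p) (hp : p ∈ Icc 0 1) (s : ℝ) :
    mgf (fun ω => (Z ω : ℝ)) μ s ≤ exp (n * p * (exp s - 1)) := by
  rw [← Function.comp_def, ← mgf_map hZ.aemeasurable (by fun_prop), hlaw]
  exact mgf_binomialMeasure_le hp s

lemma integrable_exp_mul_natCast_of_map_eq_binomialMeasure {Z : Ω → ℕ} {n : ℕ} {p : ℝ}
    (hZ : Measurable Z) (hlaw : μ.map Z = binomialMeasure n p) (s : ℝ) :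
    Integrable (fun ω => exp (s * Z ω)) μ := by
  have h := integrable_binomialMeasure n p fun k => exp (s * k)
  rw [← hlaw] at h
  exact (integrable_map_measure (by fun_prop) hZ.aemeasurable).mp h

theorem measure_sum_gt_le_of_map_eq_binomialMeasure [Fintype ι] {Z : ι → Ω → ℕ} {n : ι → ℕ}
    {p : ι → ℝ} (hZ : ∀ i, Measurable (Z i)) (hindep : iIndepFun Z μ)
    (hlaw : ∀ i, μ.map (Z i) = binomialMeasure (n i) (p i)) (hp : ∀ i, p i ∈ Icc 0 1)
    {s : ℝ} (hs : 0 ≤ s) (a : ℝ) :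
    μ {ω | a < ((∑ i, Z i ω : ℕ) : ℝ)} ≤
      ENNReal.ofReal (exp (-s * a + (exp s - 1) * ∑ i, (n i : ℝ) * p i)) := by
  have := hindep.isProbabilityMeasure
  set X : ι → Ω → ℝ := fun i ω => (Z i ω : ℝ)
  have hX : ∀ i, Measurable (X i) := fun i => measurable_from_top.comp (hZ i)
  have hindepX : iIndepFun X μ := hindep.comp _ fun _ => measurable_from_top
  have hint : Integrable (fun ω => exp (s * (∑ i, X i) ω)) μ :=
    hindepX.integrable_exp_mul_sum hX fun i _ =>
      integrable_exp_mul_natCast_of_map_eq_binomialMeasure (hZ i) (hlaw i) s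
  have hmgf : mgf (∑ i, X i) μ s ≤ exp ((exp s - 1) * ∑ i, (n i : ℝ) * p i) := by
    rw [hindepX.mgf_sum hX, Finset.mul_sum, exp_sum]
    refine Finset.prod_le_prod (fun i _ => mgf_nonneg) fun i _ => ?_
    rw [mul_comm]
    exact mgf_natCast_le_of_map_eq_binomialMeasure (hZ i) (hlaw i) (hp i) s
  have hevent : {ω | a < ((∑ i, Z i ω : ℕ) : ℝ)} ⊆ {ω | a ≤ (∑ i, X i) ω} := fun ω hω => by
    simpa [X] using (show a < ((∑ i, Z i ω : ℕ) : ℝ) from hω).le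
  calc μ {ω | a < ((∑ i, Z i ω : ℕ) : ℝ)} ≤ μ {ω | a ≤ (∑ i, X i) ω} := measure_mono hevent
    _ = ENNReal.ofReal (μ.real {ω | a ≤ (∑ i, X i) ω}) :=
        (ofReal_measureReal (measure_ne_top μ _)).symm
    _ ≤ ENNReal.ofReal (exp (-s * a) * exp ((exp s - 1) * ∑ i, (n i : ℝ) * p i)) := by
        gcongr
        exact (measure_ge_le_exp_mul_mgf a hs hint).trans (by gcongr)
    _ = _ := by rw [← exp_add]

end Chernoff

lemma one_sub_mul_one_sub_pow_mem_Icc {a b : ℝ} (ha : a ∈ Icc 0 1) (hb : b ∈ Icc 0 1) (m : ℕ) :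
    1 - (1 - a) * (1 - b) ^ m ∈ Icc 0 1 := by
  obtain ⟨ha0, ha1⟩ := ha
  obtain ⟨hb0, hb1⟩ := hb
  have hpow0 : 0 ≤ (1 - b) ^ m := pow_nonneg (by linarith) m
  have hpow1 : (1 - b) ^ m ≤ 1 := pow_le_one₀ (by linarith) (by linarith)
  constructor <;> nlinarith

lemma one_sub_mul_one_sub_pow_le {a b : ℝ} (ha : a ∈ Icc 0 1) (hb0 : 0 ≤ b) (hb2 : b ≤ 2)
    (m : ℕ) : 1 - (1 - a) * (1 - b) ^ m ≤ a + m * b := by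
  have hbernoulli : 1 + m * -b ≤ (1 + -b) ^ m := one_add_mul_le_pow (by linarith) m
  have hmb : 0 ≤ a * (m * b) := by have := ha.1; positivity
  rw [← sub_eq_add_neg] at hbernoulli
  nlinarith [mul_le_mul_of_nonneg_left hbernoulli (sub_nonneg.2 ha.2)]

section pfun

variable {n : ℕ} {ε r : ℝ}

lemma pfun_mem_Icc (hε0 : 0 ≤ 1 - ε) (hεn : 1 - ε ≤ n) (hr0 : 0 ≤ r) (hrn : r ≤ n * log n)
    (t : ℕ) : pfun n ε r t ∈ Icc 0 1 :=
  one_sub_mul_one_sub_pow_mem_Icc (unitInterval.div_mem hε0 n.cast_nonneg hεn)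
    (unitInterval.div_mem hr0 (hr0.trans hrn) hrn) t

lemma natCast_mul_pfun_le (hε0 : 0 ≤ 1 - ε) (hεn : 1 - ε ≤ n) (hr0 : 0 ≤ r)
    (hrn : r ≤ n * log n) (hlog : 0 < log n) (t : ℕ) :
    n * pfun n ε r t ≤ 1 - ε + t * r / log n := by
  have hn : (0 : ℝ) < n := by
    rcases n.eq_zero_or_pos with rfl | hn
    · simp at hlog
    · exact_mod_cast hn
  have hb := unitInterval.div_mem hr0 (hr0.trans hrn) hrn
  calc n * pfun n ε r t ≤ n * ((1 - ε) / n + t * (r / (n * log n))) := by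
        gcongr
        exact one_sub_mul_one_sub_pow_le (unitInterval.div_mem hε0 n.cast_nonneg hεn) hb.1
          (hb.2.trans one_le_two) t
    _ = 1 - ε + t * r / log n := by field_simp

lemma sum_natCast_mul_pfun_le (hε0 : 0 ≤ 1 - ε) (hεn : 1 - ε ≤ n) (hr0 : 0 ≤ r)
    (hrn : r ≤ n * log n) (hlog : 0 < log n) {T : ℕ} {K : ℝ} (hT : T ≤ K * log n) :
    ∑ t : Fin T, n * pfun n ε r (t + 1) ≤ T * (1 - ε + K * r) := by
  have hterm (t : Fin T) : n * pfun n ε r (t + 1) ≤ 1 - ε + K * r := by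
    have htT : ((t + 1 : ℕ) : ℝ) ≤ T := by exact_mod_cast t.2
    have htr : ((t + 1 : ℕ) : ℝ) * r / log n ≤ K * r := by
      rw [div_le_iff₀ hlog]
      nlinarith
    linarith [natCast_mul_pfun_le hε0 hεn hr0 hrn hlog (t + 1)]
  calc ∑ t : Fin T, n * pfun n ε r (t + 1) ≤ ∑ _t : Fin T, (1 - ε + K * r) :=
        Finset.sum_le_sum fun t _ => hterm t
    _ = T * (1 - ε + K * r) := by simp [mul_add]

end pfun

/-- `Z i` is the variable `Z_{i+1}` of the informal statement. -/
theorem sum_binomial_tail_bound_general (ε r : ℝ) (hε1 : ε < 1) (hr : 0 < r) :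
    ∀ c > (0 : ℝ), ∃ K₁ > (0 : ℝ), ∃ N : ℕ, ∀ n ≥ N, ∀ T : ℕ, 1 ≤ T →
      (T : ℝ) ≤ K0 ε r * Real.log n →
      ∀ (Ω : Type) (_ : MeasurableSpace Ω) (μ : Measure Ω),
        IsProbabilityMeasure μ →
        ∀ Z : Fin T → Ω → ℕ, (∀ t, Measurable (Z t)) →
          ProbabilityTheory.iIndepFun Z μ →
          (∀ t : Fin T, Measure.map (Z t) μ = binomialMeasure n (pfun n ε r (t + 1))) →
          μ {ω | K₁ * Real.log n < ((∑ t, Z t ω : ℕ) : ℝ)} ≤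
            ENNReal.ofReal ((n : ℝ) ^ (-c)) := by
  intro c hc
  have hK : 1 ≤ K0 ε r := le_max_left _ _
  have he : 0 < exp 1 - 1 := by linarith [add_one_lt_exp one_ne_zero]
  set B := (1 - ε + K0 ε r * r) * (exp 1 - 1)
  have hB0 : 0 < B := mul_pos (by nlinarith) he
  refine ⟨c + K0 ε r * B, add_pos hc (mul_pos (by linarith) hB0), ⌈max 3 (max r (1 - ε))⌉₊, ?_⟩
  intro n hn T _ hT Ω _ μ _ Z hZ hindep hlaw
  have hN : max 3 (max r (1 - ε)) ≤ n := Nat.ceil_le.1 hn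
  simp only [max_le_iff] at hN
  obtain ⟨hn3, hrn, hεn⟩ := hN
  have hlog : 1 ≤ log n := by
    rw [le_log_iff_exp_le (by linarith)]
    linarith [exp_one_lt_d9]
  have hrn' : r ≤ n * log n := by nlinarith
  have hsum := sum_natCast_mul_pfun_le (by linarith) hεn hr.le hrn' (by linarith) hT
  refine (measure_sum_gt_le_of_map_eq_binomialMeasure hZ hindep hlaw
    (fun t => pfun_mem_Icc (by linarith) hεn hr.le hrn' _) zero_le_one _).trans ?_
  gcongr
  rw [rpow_def_of_pos (by linarith), exp_le_exp]
  nlinarith [mul_le_mul_of_nonneg_left hsum he.le, mul_le_mul_of_nonneg_right hT hB0.le]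

/-- Tail bound for a sum of independent binomials `Z_t ~ Bin(n, p(t))`, `1 ≤ t ≤ T`,
with `T ≤ K₀ ln n`: for every `c > 0` there is `K₁ > 0` such that for all large `n`,
`P(Z₁ + ⋯ + Z_T > K₁ ln n) ≤ n^{-c}`.  (Here `Z i` is the variable `Z_{i+1}`.) -/
theorem sum_binomial_tail_bound (ε r : ℝ) (hε0 : 0 < ε) (hε1 : ε < 1) (hr : 0 < r) :
    ∀ c > (0 : ℝ), ∃ K₁ > (0 : ℝ), ∃ N : ℕ, ∀ n ≥ N, ∀ T : ℕ, 1 ≤ T →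
      (T : ℝ) ≤ K0 ε r * Real.log n →
      ∀ (Ω : Type) (_ : MeasurableSpace Ω) (μ : Measure Ω),
        IsProbabilityMeasure μ →
        ∀ Z : Fin T → Ω → ℕ, (∀ t, Measurable (Z t)) →
          ProbabilityTheory.iIndepFun Z μ →
          (∀ t : Fin T, Measure.map (Z t) μ = binomialMeasure n (pfun n ε r (t + 1))) →
          μ {ω | K₁ * Real.log n < ((∑ t, Z t ω : ℕ) : ℝ)} ≤
            ENNReal.ofReal ((n : ℝ) ^ (-c)) :=
  sum_binomial_tail_bound_general ε r hε1 hr
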